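/- arXiv:math/0402128 — 5 statements merged into one kernel-verified Lean document; each statement's English description precedes it below -/
import Mathlib

section
/- For a natural number n > 2, n is prime if and only if ∏_{d=1}^{n-1} (1 - 2^d) ≡ n (mod 2^n - 1). -/
open Polynomial Finset

/-- coefficient of a polynomial composed with `C a * X`. -/
lemma vant_coeff_comp_C_mul_X {R : Type*} [CommRing R] (Q : R[X]) (a : R) (i : ℕ) :
    (Q.comp (C a * X)).coeff i = a ^ i * Q.coeff i := by
  induction Q using Polynomial.induction_on' with
  | add p q hp hq => simp [add_comp, hp, hq, mul_add]
  | monomial n c =>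
      simp only [monomial_comp, mul_pow, ← C_pow, coeff_monomial]
      rw [← mul_assoc, ← C_mul, coeff_C_mul, coeff_X_pow]
      by_cases h : n = i
      · subst h; rw [if_pos rfl, if_pos rfl]; ring
      · rw [if_neg h, if_neg (fun he => h he.symm)]; ring

/-- if `r ∣ 2^k - 1` then the order of `2` in `ZMod r` divides `k`. -/
lemma vant_orderOf_dvd (r k : ℕ) (h : r ∣ 2 ^ k - 1) :
    orderOf (2 : ZMod r) ∣ k := by
  apply orderOf_dvd_of_pow_eq_one
  have h1 : (1 : ℕ) ≤ 2 ^ k := Nat.one_le_two_pow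
  have h0 : ((2 ^ k - 1 : ℕ) : ZMod r) = 0 := (ZMod.natCast_eq_zero_iff _ _).2 h
  rw [Nat.cast_sub h1] at h0
  push_cast at h0
  linear_combination h0

lemma vant_mersenne_coprime {i p : ℕ} (h : Nat.Coprime i p) :
    Nat.Coprime (2 ^ i - 1) (2 ^ p - 1) := by
  by_contra hg
  rw [Nat.Coprime] at hg
  have h2 : 2 ≤ Nat.gcd (2 ^ i - 1) (2 ^ p - 1) := by
    rcases Nat.eq_zero_or_pos (Nat.gcd (2 ^ i - 1) (2 ^ p - 1)) with h0 | h1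
    · exfalso
      rw [Nat.gcd_eq_zero_iff] at h0
      have hi1 : (1 : ℕ) ≤ 2 ^ i := Nat.one_le_two_pow
      have hp1 : (1 : ℕ) ≤ 2 ^ p := Nat.one_le_two_pow
      have hi : 2 ^ i = 1 := by omega
      have hpp : 2 ^ p = 1 := by omega
      have hi0 : i = 0 := by
        by_contra hne
        have := Nat.one_lt_two_pow_iff.mpr hne
        omega
      have hp0 : p = 0 := by
        by_contra hne
        have := Nat.one_lt_two_pow_iff.mpr hne
        omega
      rw [hi0, hp0] at h
      simp [Nat.Coprime] at h
    · omega
  set g := Nat.gcd (2 ^ i - 1) (2 ^ p - 1) with hgdef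
  have hr : (Nat.minFac g).Prime := Nat.minFac_prime (by omega)
  have hri : Nat.minFac g ∣ 2 ^ i - 1 := (Nat.minFac_dvd g).trans (Nat.gcd_dvd_left _ _)
  have hrp : Nat.minFac g ∣ 2 ^ p - 1 := (Nat.minFac_dvd g).trans (Nat.gcd_dvd_right _ _)
  have hoi := vant_orderOf_dvd _ _ hri
  have hop := vant_orderOf_dvd _ _ hrp
  have hone : orderOf (2 : ZMod (Nat.minFac g)) ∣ 1 := by
    have := Nat.dvd_gcd hoi hop
    rwa [h] at this
  rw [Nat.dvd_one, orderOf_eq_one_iff] at hone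
  have hcast : ((1 : ℕ) : ZMod (Nat.minFac g)) = 0 := by
    push_cast
    linear_combination hone
  rw [ZMod.natCast_eq_zero_iff, Nat.dvd_one] at hcast
  exact hr.one_lt.ne' hcast

/-- Forward direction: for an odd prime `p`,
`∏_{d=1}^{p-1} (1 - 2^d) = p` in `ZMod (2^p - 1)`. -/
lemma vant_forward (p : ℕ) (hp : p.Prime) (h2p : 2 < p) :
    ∏ d ∈ Finset.Ico 1 p, (1 - (2 : ZMod (2 ^ p - 1)) ^ d) = (p : ZMod (2 ^ p - 1)) := by
  set N := 2 ^ p - 1 with hN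
  have hNbig : 8 ≤ 2 ^ p := by
    calc (8:ℕ) = 2 ^ 3 := rfl
    _ ≤ 2 ^ p := Nat.pow_le_pow_right (by norm_num) h2p
  haveI : NeZero N := ⟨by omega⟩
  haveI : Fact (1 < N) := ⟨by omega⟩
  have h2 : (2 : ZMod N) ^ p = 1 := by
    have hc : ((2 ^ p : ℕ) : ZMod N) = ((N + 1 : ℕ) : ZMod N) := by
      congr 1; omega
    push_cast at hc
    rw [hc, ZMod.natCast_self, zero_add]
  have hper : ∀ k, (2 : ZMod N) ^ (k + p) = 2 ^ k := by
    intro k; rw [pow_add, h2, mul_one]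
  set P : (ZMod N)[X] := ∏ d ∈ range p, (X - C ((2 : ZMod N) ^ d)) with hP
  -- P is invariant under X ↦ 2X
  have hcomp : P.comp (C 2 * X) = P := by
    rw [hP, Polynomial.prod_comp]
    have hfac : ∀ d : ℕ, (X - C ((2:ZMod N) ^ d)).comp (C 2 * X)
        = C 2 * (X - C ((2:ZMod N) ^ (d + (p - 1)))) := by
      intro d
      rw [sub_comp, X_comp, C_comp, mul_sub, ← C_mul]
      congr 2
      have e1 : (2 : ZMod N) * 2 ^ (d + (p - 1)) = 2 ^ (d + (p - 1) + 1) := by ring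
      have e2 : d + (p - 1) + 1 = d + p := by omega
      rw [e1, e2, hper]
    simp_rw [hfac]
    rw [prod_mul_distrib, prod_const, ← C_pow, Finset.card_range, h2, C_1, one_mul]
    -- reindex the shifted product
    have hps : p = (p - 1) + 1 := by omega
    have hsh : ∀ d : ℕ, (X - C ((2:ZMod N) ^ (d + 1 + (p - 1))))
        = X - C ((2:ZMod N) ^ d) := by
      intro d
      have e : d + 1 + (p - 1) = d + p := by omega
      rw [e, hper]
    rw [hps, Finset.prod_range_succ', Finset.prod_range_succ]
    simp only [Nat.add_sub_cancel, Nat.zero_add]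
    simp_rw [hsh]
  have hcoeff : ∀ i, (2 : ZMod N) ^ i * P.coeff i = P.coeff i := by
    intro i
    conv_rhs => rw [← hcomp]
    rw [vant_coeff_comp_C_mul_X]
  -- middle coefficients vanish
  have hmid : ∀ i, 0 < i → i < p → P.coeff i = 0 := by
    intro i hi0 hip
    have hco : Nat.Coprime (2 ^ i - 1) N := by
      apply vant_mersenne_coprime
      exact (hp.coprime_iff_not_dvd.mpr (Nat.not_dvd_of_pos_of_lt hi0 hip)).symm
    have hu : IsUnit ((2 : ZMod N) ^ i - 1) := by
      have hcast : ((2 ^ i - 1 : ℕ) : ZMod N) = (2 : ZMod N) ^ i - 1 := by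
        have h1 : (1:ℕ) ≤ 2 ^ i := Nat.one_le_two_pow
        push_cast [h1]
        ring
      rw [← hcast, ZMod.isUnit_iff_coprime]
      exact hco
    have hz : ((2 : ZMod N) ^ i - 1) * P.coeff i = 0 := by
      linear_combination hcoeff i
    rcases hu with ⟨u, hu⟩
    have hz' : (u : ZMod N) * P.coeff i = 0 := by rw [hu]; exact hz
    calc P.coeff i = (u⁻¹ : (ZMod N)ˣ) * ((u : ZMod N) * P.coeff i) := by
          rw [← mul_assoc]; simp
    _ = 0 := by rw [hz', mul_zero]
  have hmonic : P.Monic := monic_prod_of_monic _ _ fun d _ => monic_X_sub_C _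
  have hdeg : P.natDegree = p := by
    rw [hP, natDegree_prod_of_monic _ _ fun d _ => monic_X_sub_C _]
    simp only [natDegree_X_sub_C, Finset.sum_const, Finset.card_range, smul_eq_mul, mul_one]
  have hpodd : Odd p := hp.odd_of_ne_two (by omega)
  have hsum : ∑ d ∈ range p, d = p * ((p - 1) / 2) := by
    have h1 := Finset.sum_range_id_mul_two p
    have hm : p - 1 = 2 * ((p - 1) / 2) := by
      rcases hpodd with ⟨m, hm⟩; omega
    have h2' : p * (p - 1) = p * ((p - 1) / 2) * 2 := by
      calc p * (p - 1) = p * (2 * ((p - 1) / 2)) := by rw [← hm]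
      _ = p * ((p - 1) / 2) * 2 := by ring
    omega
  have hc0 : P.coeff 0 = -1 := by
    rw [coeff_zero_eq_eval_zero, hP, eval_prod]
    simp only [eval_sub, eval_X, eval_C, zero_sub]
    have hc : ∀ d ∈ range p, -(2:ZMod N)^d = (-1) * 2^d := by intros; ring
    rw [Finset.prod_congr rfl hc, prod_mul_distrib, prod_const, Finset.card_range,
      prod_pow_eq_pow_sum, hsum, pow_mul, h2, one_pow, mul_one]
    exact hpodd.neg_one_pow
  -- P = X^p - 1
  have hPX : P = X ^ p - 1 := by
    ext i
    rw [coeff_sub, coeff_X_pow, coeff_one]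
    rcases lt_trichotomy i p with hlt | heq | hgt
    · rcases Nat.eq_zero_or_pos i with h0 | h0
      · subst h0
        rw [hc0, if_neg (by omega : ¬ (0:ℕ) = p), if_pos rfl]
        ring
      · rw [hmid i h0 hlt, if_neg (by omega), if_neg (by omega)]
        ring
    · subst heq
      have := hmonic.coeff_natDegree
      rw [hdeg] at this
      rw [this, if_pos rfl, if_neg (by omega)]
      ring
    · rw [coeff_eq_zero_of_natDegree_lt (by omega : P.natDegree < i),
        if_neg (by omega), if_neg (by omega)]
      ring
  -- split off the factor at d = 0
  have hsplit : P = (X - C 1) * ∏ d ∈ Finset.Ico 1 p, (X - C ((2:ZMod N)^d)) := by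
    rw [hP, range_eq_Ico, Finset.prod_eq_prod_Ico_succ_bot (by omega : 0 < p)]
    norm_num
  -- differentiate and evaluate at 1
  have hd1 : eval 1 (derivative P) = ∏ d ∈ Finset.Ico 1 p, (1 - (2:ZMod N)^d) := by
    rw [hsplit, derivative_mul, derivative_sub, derivative_X, derivative_C, sub_zero,
      one_mul, eval_add, eval_mul, eval_sub, eval_X, eval_C, sub_self, zero_mul,
      add_zero, eval_prod]
    exact Finset.prod_congr rfl fun d _ => by rw [eval_sub, eval_X, eval_C]
  have hd2 : eval 1 (derivative P) = (p : ZMod N) := by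
    rw [hPX, derivative_sub, derivative_one, sub_zero, derivative_X_pow]
    simp
  rw [← hd1, hd2]

theorem vantieghem (n : ℕ) (hn : 2 < n) :
    n.Prime ↔
      (∏ d ∈ Finset.Icc 1 (n - 1), (1 - 2 ^ d) : ℤ) ≡ (n : ℤ) [ZMOD (2 ^ n - 1)] := by
  have hIcc : Finset.Icc 1 (n - 1) = Finset.Ico 1 n := by
    rw [← Finset.Ico_add_one_right_eq_Icc]
    congr 1
    omega
  constructor
  · intro hp
    have key := vant_forward n hp hn
    have hN1 : ((2:ℤ) ^ n - 1) = ((2 ^ n - 1 : ℕ) : ℤ) := by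
      have : (1:ℕ) ≤ 2 ^ n := Nat.one_le_two_pow
      push_cast [this]
      ring
    rw [hN1, ← ZMod.intCast_eq_intCast_iff]
    push_cast
    rw [hIcc]
    exact key
  · intro h
    by_contra hnp
    have hn0 : n ≠ 0 := by omega
    have hne : n.primeFactors.Nonempty := Nat.nonempty_primeFactors.mpr (by omega)
    set q := n.primeFactors.max' hne with hq
    have hqmem : q ∈ n.primeFactors := Finset.max'_mem _ _
    have hqprime : q.Prime := Nat.prime_of_mem_primeFactors hqmem
    have hqdvd : q ∣ n := Nat.dvd_of_mem_primeFactors hqmem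
    have hqlt : q < n :=
      lt_of_le_of_ne (Nat.le_of_dvd (by omega) hqdvd) fun he => hnp (he ▸ hqprime)
    have hM : ((2:ℤ) ^ q - 1) ∣ ((2:ℤ) ^ n - 1) := by
      obtain ⟨k, hk⟩ := hqdvd
      have h1 : (2:ℤ) ^ q - 1 ∣ ((2:ℤ) ^ q) ^ k - 1 ^ k := sub_dvd_pow_sub_pow _ _ _
      rwa [← pow_mul, ← hk, one_pow] at h1
    have h' := h.of_dvd hM
    have hprod : ((2:ℤ) ^ q - 1) ∣ ∏ d ∈ Finset.Icc 1 (n - 1), (1 - (2:ℤ) ^ d) := by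
      have hmem : q ∈ Finset.Icc 1 (n - 1) := by
        rw [Finset.mem_Icc]
        have := hqprime.two_le
        omega
      have hfac : ((2:ℤ) ^ q - 1) ∣ (1 - (2:ℤ) ^ q) := ⟨-1, by ring⟩
      exact hfac.trans (Finset.dvd_prod_of_mem _ hmem)
    have h0 : (∏ d ∈ Finset.Icc 1 (n - 1), (1 - (2:ℤ) ^ d)) ≡ 0 [ZMOD ((2:ℤ) ^ q - 1)] :=
      (Int.modEq_zero_iff_dvd).mpr hprod
    have hdvdn : ((2:ℤ) ^ q - 1) ∣ (n : ℤ) :=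
      (Int.modEq_zero_iff_dvd).mp (h'.symm.trans h0)
    have hdvdn' : (2 ^ q - 1 : ℕ) ∣ n := by
      have hcast : ((2 ^ q - 1 : ℕ) : ℤ) = (2:ℤ) ^ q - 1 := by
        have : (1:ℕ) ≤ 2 ^ q := Nat.one_le_two_pow
        push_cast [this]
        ring
      rwa [← hcast, Int.natCast_dvd_natCast] at hdvdn
    have hMb : 4 ≤ 2 ^ q := by
      calc (4:ℕ) = 2 ^ 2 := rfl
      _ ≤ 2 ^ q := Nat.pow_le_pow_right (by norm_num) hqprime.two_le
    set r := (2 ^ q - 1).minFac with hr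
    have hrprime : r.Prime := Nat.minFac_prime (by omega)
    have hrdvdM : r ∣ 2 ^ q - 1 := Nat.minFac_dvd _
    have hrdvdn : r ∣ n := hrdvdM.trans hdvdn'
    have hrle : r ≤ q :=
      Finset.le_max' _ _ (Nat.mem_primeFactors.mpr ⟨hrprime, hrdvdn, hn0⟩)
    have hord := vant_orderOf_dvd r q hrdvdM
    rcases hqprime.eq_one_or_self_of_dvd _ hord with h1 | hq'
    · rw [orderOf_eq_one_iff] at h1
      have hcast : ((1 : ℕ) : ZMod r) = 0 := by
        push_cast
        linear_combination h1
      rw [ZMod.natCast_eq_zero_iff, Nat.dvd_one] at hcast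
      exact hrprime.one_lt.ne' hcast
    · have h2ne : (2 : ZMod r) ≠ 0 := by
        intro h02
        have hr2 : r ∣ 2 := by
          have : ((2 : ℕ) : ZMod r) = 0 := by push_cast; exact h02
          rwa [ZMod.natCast_eq_zero_iff] at this
        have hr2' : r = 2 := ((Nat.prime_dvd_prime_iff_eq hrprime Nat.prime_two).mp hr2)
        rw [hr2'] at hrdvdM
        have : 2 ∣ 2 ^ q := dvd_pow_self 2 (by omega : q ≠ 0)
        omega
      haveI : Fact r.Prime := ⟨hrprime⟩
      have hfl : (2 : ZMod r) ^ (r - 1) = 1 := ZMod.pow_card_sub_one_eq_one h2ne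
      have hdvd : orderOf (2 : ZMod r) ∣ r - 1 := orderOf_dvd_of_pow_eq_one hfl
      rw [hq'] at hdvd
      have hle : q ≤ r - 1 := Nat.le_of_dvd (by have := hrprime.two_le; omega) hdvd
      have hqr : q < r := lt_of_le_of_lt hle (Nat.sub_lt hrprime.pos one_pos)
      exact absurd hrle (Nat.not_le.mpr hqr)
end

section
/- Let m > 1 be a natural number and Φ_m the m-th cyclotomic polynomial. Then in ℤ[X,Y], the product ∏_{1 ≤ d ≤ m, gcd(d,m)=1} (X - Y^d) is congruent to Φ_m(X) modulo the ideal generated by Φ_m(Y). -/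
open Polynomial

/-- In ℤ[X,Y] (encoded as (ℤ[Y])[X], so `X` is the outer variable and
`C X` is `Y`), the product over `d` coprime to `m` of `(X - Y^d)` is congruent
to `Φₘ(X)` modulo the ideal generated by `Φₘ(Y)`. -/
theorem vantieghem_lemma (m : ℕ) (hm : 1 < m) :
    (∏ d ∈ (Finset.Icc 1 m).filter (fun d => Nat.gcd d m = 1),
        (Polynomial.X - Polynomial.C (Polynomial.X ^ d) : Polynomial (Polynomial ℤ)))
      - (Polynomial.cyclotomic m ℤ).map Polynomial.C
      ∈ Ideal.span {Polynomial.C (Polynomial.cyclotomic m ℤ)} := by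
  have hm0 : 0 < m := by omega
  haveI : NeZero m := ⟨by omega⟩
  set ζ : ℂ := Complex.exp (2 * Real.pi * Complex.I / m) with hζdef
  have hζ : IsPrimitiveRoot ζ m := Complex.isPrimitiveRoot_exp m (by omega)
  have hint : IsIntegral ℤ ζ := hζ.isIntegral hm0
  set φ : ℤ[X] →+* ℂ := (Polynomial.aeval ζ).toRingHom with hφdef
  have hker : ∀ p : ℤ[X], φ p = 0 → cyclotomic m ℤ ∣ p := by
    intro p hp
    rw [cyclotomic_eq_minpoly hζ hm0]
    exact minpoly.isIntegrallyClosed_dvd hint hp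
  have hmap :
      ((∏ d ∈ (Finset.Icc 1 m).filter (fun d => Nat.gcd d m = 1),
          (Polynomial.X - Polynomial.C (Polynomial.X ^ d) : Polynomial (Polynomial ℤ)))
        - (Polynomial.cyclotomic m ℤ).map Polynomial.C).map φ = 0 := by
    rw [Polynomial.map_sub, Polynomial.map_prod]
    have h1 : ((cyclotomic m ℤ).map (Polynomial.C : ℤ →+* ℤ[X])).map φ = cyclotomic m ℂ := by
      rw [Polynomial.map_map]
      have hcomp : φ.comp (Polynomial.C : ℤ →+* ℤ[X]) = Int.castRingHom ℂ := by
        ext n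
        simp [hφdef]
      rw [hcomp, map_cyclotomic_int]
    have h2 : ∀ d ∈ (Finset.Icc 1 m).filter (fun d => Nat.gcd d m = 1),
        ((Polynomial.X - Polynomial.C (Polynomial.X ^ d) : Polynomial (Polynomial ℤ))).map φ
          = Polynomial.X - Polynomial.C (ζ ^ d) := by
      intro d _
      simp [Polynomial.map_sub, hφdef]
    rw [Finset.prod_congr rfl h2, h1]
    rw [cyclotomic_eq_prod_X_sub_primitiveRoots hζ]
    rw [sub_eq_zero]
    refine Finset.prod_bij (fun d _ => ζ ^ d) ?_ ?_ ?_ ?_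
    · intro d hd
      simp only [Finset.mem_filter, Finset.mem_Icc] at hd
      exact (mem_primitiveRoots hm0).2 ((hζ.pow_iff_coprime hm0 d).2 hd.2)
    · intro d hd e he hde
      simp only [Finset.mem_filter, Finset.mem_Icc] at hd he
      have hdm : d < m := by
        rcases lt_or_eq_of_le hd.1.2 with h | h
        · exact h
        · exfalso; rw [h] at hd; simp [Nat.gcd_self] at hd; omega
      have hem : e < m := by
        rcases lt_or_eq_of_le he.1.2 with h | h
        · exact h
        · exfalso; rw [h] at he; simp [Nat.gcd_self] at he; omega
      exact hζ.pow_inj hdm hem hde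
    · intro μ hμ
      have hμp : IsPrimitiveRoot μ m := (mem_primitiveRoots hm0).1 hμ
      obtain ⟨i, hi, hiμ⟩ := hζ.eq_pow_of_pow_eq_one hμp.pow_eq_one
      have hcop : Nat.Coprime i m := by
        rw [← hζ.pow_iff_coprime hm0 i, hiμ]; exact hμp
      have hi1 : 1 ≤ i := by
        rcases Nat.eq_zero_or_pos i with h | h
        · exfalso; rw [h] at hcop; rw [Nat.coprime_zero_left] at hcop; omega
        · exact h
      have hmem : i ∈ (Finset.Icc 1 m).filter (fun d => Nat.gcd d m = 1) := by
        simp only [Finset.mem_filter, Finset.mem_Icc]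
        exact ⟨⟨hi1, hi.le⟩, hcop⟩
      exact ⟨i, hmem, hiμ⟩
    · intro d hd; rfl
  rw [Ideal.mem_span_singleton, Polynomial.C_dvd_iff_dvd_coeff]
  intro n
  apply hker
  have := congrArg (fun q : ℂ[X] => q.coeff n) hmap
  simp only [Polynomial.coeff_map, Polynomial.coeff_zero] at this
  exact this
end

section
/- If p is a prime number and m is any integer, then ∏_{d=1}^{p-1} (1 - m^d) ≡ p (mod 1 + m + m^2 + ... + m^{p-1}). -/
open Polynomial Finset

theorem prime_congruence (p : ℕ) (hp : p.Prime) (m : ℤ) :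
    (∏ d ∈ Finset.Icc 1 (p - 1), (1 - m ^ d)) ≡ (p : ℤ)
      [ZMOD (∑ k ∈ Finset.range p, m ^ k)] := by
  haveI : Fact p.Prime := ⟨hp⟩
  -- primitive p-th root of unity in ℂ
  set ζ : ℂ := Complex.exp (2 * Real.pi * Complex.I / p) with hζdef
  have hζ' : IsPrimitiveRoot ζ p := Complex.isPrimitiveRoot_exp p hp.ne_zero
  -- the polynomial F
  set F : ℤ[X] := (∏ d ∈ Finset.Icc 1 (p - 1), (1 - X ^ d)) - C (p : ℤ) with hF
  have hroot : Polynomial.aeval ζ F = 0 := by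
    have key : ∏ k ∈ range (p - 1), (1 - ζ ^ (k + 1)) = (p - 1 : ℕ) + 1 := by
      have hp1 : p - 1 + 1 = p := Nat.succ_pred_eq_of_pos hp.pos
      exact IsPrimitiveRoot.prod_one_sub_pow_eq_order (hp1 ▸ hζ')
    have hicc : ∏ d ∈ Finset.Icc 1 (p - 1), (1 - ζ ^ d)
        = ∏ k ∈ range (p - 1), (1 - ζ ^ (k + 1)) := by
      rw [← Finset.Ico_add_one_right_eq_Icc, Finset.prod_Ico_eq_prod_range]
      simp [Nat.succ_sub_one, add_comm]
    have hp1 : ((p - 1 : ℕ) : ℂ) + 1 = (p : ℂ) := by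
      have : (p - 1) + 1 = p := Nat.succ_pred_eq_of_pos hp.pos
      exact_mod_cast congrArg (Nat.cast : ℕ → ℂ) this
    simp only [hF, map_sub, map_prod, map_sub, map_one, map_pow, aeval_X, aeval_C,
      hicc, key, hp1]
    push_cast
    ring
  have hdvd : (∑ k ∈ Finset.range p, (X : ℤ[X]) ^ k) ∣ F := by
    rw [← Polynomial.cyclotomic_prime ℤ p,
      Polynomial.cyclotomic_eq_minpoly hζ' hp.pos]
    exact minpoly.isIntegrallyClosed_dvd (hζ'.isIntegral hp.pos) hroot
  -- evaluate at m
  obtain ⟨G, hG⟩ := hdvd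
  have := congrArg (Polynomial.eval m) hG
  simp only [hF, eval_sub, eval_prod, eval_sub, eval_one, eval_pow, eval_X, eval_C, eval_mul,
    eval_finset_sum] at this
  have hdvd' : (∑ k ∈ Finset.range p, m ^ k) ∣
      ((∏ d ∈ Finset.Icc 1 (p - 1), (1 - m ^ d)) - (p : ℤ)) := ⟨G.eval m, this⟩
  exact (Int.modEq_iff_dvd.mpr (by simpa using hdvd'.neg_right)).symm.symm
end

section
/- Let p be a composite natural number with smallest prime factor q, and write p = q·a. If m ≥ 3 and ∏_{d=1}^{p-1} (1 - m^d) ≡ p (mod (m^p - 1)/(m - 1)), then (m^a - 1)/(m - 1) ≤ p. -/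
theorem composite_bound (p q a m : ℕ) (hp : 2 < p) (hnp : ¬ p.Prime)
    (hq : q = p.minFac) (ha : p = q * a) (hm : 3 ≤ m)
    (hcong : (∏ d ∈ Finset.Icc 1 (p - 1), (1 - (m : ℤ) ^ d)) ≡ (p : ℤ)
      [ZMOD (((m : ℤ) ^ p - 1) / ((m : ℤ) - 1))]) :
    ((m : ℤ) ^ a - 1) / ((m : ℤ) - 1) ≤ (p : ℤ) := by
  have hm1 : (1 : ℤ) < (m : ℤ) := by exact_mod_cast (by omega : 1 < m)
  have hm0 : (m : ℤ) - 1 ≠ 0 := by linarith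
  have key : ∀ n : ℕ, ((m : ℤ) ^ n - 1) / ((m : ℤ) - 1)
      = ∑ i ∈ Finset.range n, (m : ℤ) ^ i := by
    intro n
    rw [← geom_sum_mul, Int.mul_ediv_cancel _ hm0]
  have hqp : p.minFac.Prime := Nat.minFac_prime (by omega)
  have hq2 : 2 ≤ q := hq ▸ hqp.two_le
  have ha1 : 1 ≤ a := by
    rcases Nat.eq_zero_or_pos a with h | h
    · subst h; simp at ha; omega
    · exact h
  have hap : a < p := by nlinarith
  set D : ℤ := ∑ i ∈ Finset.range a, (m : ℤ) ^ i with hD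
  set N : ℤ := ∑ i ∈ Finset.range p, (m : ℤ) ^ i with hN
  -- m^a - 1 ∣ m^p - 1
  have hdvd1 : ((m : ℤ) ^ a - 1) ∣ ((m : ℤ) ^ p - 1) := by
    have := sub_dvd_pow_sub_pow ((m : ℤ) ^ a) 1 q
    rwa [one_pow, ← pow_mul, mul_comm a q, ← ha] at this
  -- D ∣ N
  have hDN : D ∣ N := by
    obtain ⟨c, hc⟩ := hdvd1
    refine ⟨c, mul_right_cancel₀ hm0 ?_⟩
    rw [hD, hN, geom_sum_mul, hc, mul_right_comm, geom_sum_mul]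
  -- D ∣ product
  have hDprod : D ∣ ∏ d ∈ Finset.Icc 1 (p - 1), (1 - (m : ℤ) ^ d) := by
    refine dvd_trans ⟨-((m : ℤ) - 1), ?_⟩
      (Finset.dvd_prod_of_mem _ (Finset.mem_Icc.mpr ⟨ha1, by omega⟩))
    have := geom_sum_mul ((m : ℤ)) a
    linarith [this]
  -- congruence mod D
  have hcong' : (∏ d ∈ Finset.Icc 1 (p - 1), (1 - (m : ℤ) ^ d)) ≡ (p : ℤ) [ZMOD D] := by
    have hNN : ((m : ℤ) ^ p - 1) / ((m : ℤ) - 1) = N := key p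
    rw [hNN] at hcong
    exact hcong.of_dvd hDN
  have hDp : D ∣ (p : ℤ) := by
    have h1 : D ∣ ((p : ℤ) - ∏ d ∈ Finset.Icc 1 (p - 1), (1 - (m : ℤ) ^ d)) := hcong'.dvd
    have := dvd_add h1 hDprod
    simpa using this
  rw [key a]
  exact Int.le_of_dvd (by exact_mod_cast (by omega : 0 < p)) hDp
end

section
/- For m > 2, if the m-th cyclotomic polynomial satisfies Φ_m(X) ≡ 1 + ∏_{1 ≤ i ≤ m-1, gcd(i,m)=1} (X - i - 1) (mod m), then m is prime. -/
open Polynomial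

lemma aux_card (m : ℕ) (hm : 2 < m) :
    ((Finset.Icc 1 (m - 1)).filter (fun i => Nat.gcd i m = 1)).card = m.totient := by
  rw [Nat.totient]
  congr 1
  ext i
  simp only [Finset.mem_filter, Finset.mem_Icc, Finset.mem_range]
  constructor
  · rintro ⟨⟨h1, h2⟩, h3⟩
    exact ⟨by omega, by rwa [Nat.Coprime, Nat.gcd_comm]⟩
  · rintro ⟨h1, h2⟩
    have hi : i ≠ 0 := by
      rintro rfl
      rw [Nat.coprime_zero_right] at h2
      omega
    exact ⟨⟨by omega, by omega⟩, by rwa [Nat.Coprime, Nat.gcd_comm] at h2⟩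

lemma aux_gcd (m : ℕ) (i : ℕ) (_h1 : 1 ≤ i) (h2 : i ≤ m - 1) (hm : 2 < m)
    (h3 : Nat.gcd i m = 1) : Nat.gcd (m - i) m = 1 := by
  have h4 : Nat.gcd (m - i) m = Nat.gcd (m - i) ((m - i) + i) := by
    rw [Nat.sub_add_cancel (by omega)]
  rw [Nat.gcd_self_add_right] at h4
  rw [h4]
  exact (Nat.coprime_sub_self_left (by omega)).mpr (by rwa [Nat.Coprime, Nat.gcd_comm])

lemma aux_sum (m : ℕ) (hm : 2 < m) :
    m ∣ ∑ i ∈ (Finset.Icc 1 (m - 1)).filter (fun i => Nat.gcd i m = 1), i := by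
  set S := (Finset.Icc 1 (m - 1)).filter (fun i => Nat.gcd i m = 1) with hS
  have hmem : ∀ i ∈ S, m - i ∈ S := by
    intro i hi
    simp only [hS, Finset.mem_filter, Finset.mem_Icc] at hi ⊢
    exact ⟨⟨by omega, by omega⟩, aux_gcd m i hi.1.1 hi.1.2 hm hi.2⟩
  have key : ∑ i ∈ S, i = ∑ i ∈ S, (m - i) := by
    apply Finset.sum_nbij' (fun i => m - i) (fun i => m - i)
    · exact hmem
    · exact hmem
    · intro a ha
      simp only [hS, Finset.mem_filter, Finset.mem_Icc] at ha
      omega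
    · intro a ha
      simp only [hS, Finset.mem_filter, Finset.mem_Icc] at ha
      omega
    · intro a ha
      simp only [hS, Finset.mem_filter, Finset.mem_Icc] at ha
      omega
  have h2 : 2 * ∑ i ∈ S, i = S.card * m := by
    have : (∑ i ∈ S, i) + ∑ i ∈ S, (m - i) = ∑ i ∈ S, m := by
      rw [← Finset.sum_add_distrib]
      apply Finset.sum_congr rfl
      intro i hi
      simp only [hS, Finset.mem_filter, Finset.mem_Icc] at hi
      omega
    rw [Finset.sum_const, smul_eq_mul] at this
    omega
  have heven : Even m.totient := Nat.totient_even hm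
  obtain ⟨t, ht⟩ := heven
  rw [aux_card m hm, ht] at h2
  have h3 : (t + t) * m = 2 * (t * m) := by ring
  rw [h3] at h2
  have h4 : ∑ i ∈ S, i = t * m := by omega
  exact ⟨t, by rw [h4]; ring⟩

theorem congruence_implies_prime (m : ℕ) (hm : 2 < m)
    (h : (Polynomial.cyclotomic m ℤ).map (Int.castRingHom (ZMod m)) =
        (1 + ∏ i ∈ (Finset.Icc 1 (m - 1)).filter (fun i => Nat.gcd i m = 1),
            (Polynomial.X - Polynomial.C (i : ℤ) - 1)).map (Int.castRingHom (ZMod m))) :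
    m.Prime := by
  haveI : NeZero m := ⟨by omega⟩
  haveI : Fact (1 < m) := ⟨by omega⟩
  set S := (Finset.Icc 1 (m - 1)).filter (fun i => Nat.gcd i m = 1) with hS
  by_cases hpp : ∃ p k, Nat.Prime p ∧ p ^ k = m
  · obtain ⟨p, k, hp, hpk⟩ := hpp
    match k, hpk with
    | 0, hpk => exfalso; simp at hpk; omega
    | 1, hpk => rw [pow_one] at hpk; rwa [← hpk]
    | (k+2), hpk =>
      exfalso
      -- coefficient at totient m - 1
      set d := m.totient - 1 with hd
      have hφ : m.totient = p ^ (k + 1) * (p - 1) := by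
        rw [← hpk, Nat.totient_prime_pow hp (by omega)]
        simp
      have hp2 : 2 ≤ p := hp.two_le
      have hpow2 : 2 ≤ p ^ (k + 1) := by
        calc 2 ≤ p := hp2
        _ ≤ p ^ (k+1) := Nat.le_self_pow (by omega) p
      have hφpos : 0 < m.totient := Nat.totient_pos.mpr (by omega)
      have hφ2 : 2 ≤ m.totient := by
        rcases Nat.totient_even hm with ⟨t, ht⟩
        omega
      -- LHS coefficient is zero
      have hL : (Polynomial.cyclotomic m ℤ).coeff d = 0 := by
        rw [← hpk, show p ^ (k+2) = p ^ ((k+1)+1) by ring,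
          cyclotomic_prime_pow_eq_geom_sum hp, finset_sum_coeff]
        apply Finset.sum_eq_zero
        intro i hi
        rw [← pow_mul, coeff_X_pow, if_neg]
        intro hdi
        have hdvd : p ^ (k+1) ∣ d := ⟨i, hdi⟩
        have hdvd1 : p ^ (k+1) ∣ d + 1 := by
          have : d + 1 = p ^ (k+1) * (p - 1) := by omega
          exact ⟨p - 1, this⟩
        have : p ^ (k+1) ∣ 1 := by
          have := Nat.dvd_sub hdvd1 hdvd
          simpa using this
        have := Nat.le_of_dvd one_pos this
        omega
      -- RHS coefficient
      have hfact : ∀ i : ℕ, (Polynomial.X - Polynomial.C (i : ℤ) - 1)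
          = Polynomial.X - Polynomial.C ((i : ℤ) + 1) := by
        intro i
        rw [map_add, Polynomial.C_1]
        ring
      have hProd : (∏ i ∈ S, (Polynomial.X - Polynomial.C (i : ℤ) - 1))
          = ∏ i ∈ S, (Polynomial.X - Polynomial.C ((i : ℤ) + 1)) := by
        exact Finset.prod_congr rfl fun i _ => hfact i
      have hmono : ∀ i ∈ S, (Polynomial.X - Polynomial.C ((i : ℤ) + 1)).Monic :=
        fun i _ => monic_X_sub_C _
      have hdeg : (∏ i ∈ S, (Polynomial.X - Polynomial.C ((i : ℤ) + 1))).natDegree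
          = m.totient := by
        rw [natDegree_prod_of_monic _ _ hmono]
        rw [Finset.sum_congr rfl (fun (i : ℕ) _ => natDegree_X_sub_C ((i : ℤ) + 1))]
        simp only [Finset.sum_const, smul_eq_mul, mul_one]
        rw [hS, aux_card m hm]
      have hR : (1 + ∏ i ∈ S, (Polynomial.X - Polynomial.C (i : ℤ) - 1)).coeff d
          = -∑ i ∈ S, ((i : ℤ) + 1) := by
        rw [hProd, Polynomial.coeff_add, Polynomial.coeff_one, if_neg (by omega)]
        rw [← prod_X_sub_C_nextCoeff (s := S) (f := fun i => (i : ℤ) + 1)]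
        rw [Polynomial.nextCoeff_of_natDegree_pos (by rw [hdeg]; omega), hdeg]
        simp [hd]
      -- combine
      have hc := congrArg (fun q => Polynomial.coeff q d) h
      simp only [Polynomial.coeff_map, hL, hR, map_zero, map_neg] at hc
      have hsum : ((∑ i ∈ S, ((i : ℤ) + 1) : ℤ) : ZMod m) = (m.totient : ZMod m) := by
        push_cast
        rw [Finset.sum_add_distrib, Finset.sum_const, ← aux_card m hm]
        have : (∑ i ∈ S, (i : ZMod m)) = 0 := by
          have := aux_sum m hm
          rw [← Nat.cast_sum]
          rw [ZMod.natCast_eq_zero_iff]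
          exact this
        rw [this]
        simp [hS]
      rw [show ((Int.castRingHom (ZMod m)) (∑ i ∈ S, ((i : ℤ) + 1)) : ZMod m)
        = ((∑ i ∈ S, ((i : ℤ) + 1) : ℤ) : ZMod m) from rfl, hsum] at hc
      have : (m.totient : ZMod m) = 0 := by
        have := hc.symm
        rwa [neg_eq_zero] at this
      rw [ZMod.natCast_eq_zero_iff] at this
      have := Nat.le_of_dvd hφpos this
      have := Nat.totient_lt m (by omega)
      omega
  · exfalso
    have hnp : ∀ {p : ℕ}, p.Prime → ∀ k : ℕ, p ^ k ≠ m := by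
      intro p hp k hk
      exact hpp ⟨p, k, hp, hk⟩
    have h1 := congrArg (Polynomial.eval 1) h
    rw [Polynomial.eval_one_map, Polynomial.eval_one_map,
      Polynomial.eval_one_cyclotomic_not_prime_pow hnp] at h1
    simp only [Polynomial.eval_add, Polynomial.eval_one, Polynomial.eval_prod,
      Polynomial.eval_sub, Polynomial.eval_X, Polynomial.eval_C, map_add, map_one,
      map_prod, map_sub, map_one, map_intCast] at h1
    simp only [eq_intCast] at h1
    have h2 : (∏ i ∈ S, (1 - ((i : ℤ) : ZMod m) - 1)) = 0 := left_eq_add.mp h1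
    have hu : IsUnit (∏ i ∈ S, (1 - ((i : ℤ) : ZMod m) - 1)) := by
      apply Finset.prod_induction _ IsUnit (fun a b => IsUnit.mul) isUnit_one
      intro i hi
      simp only [hS, Finset.mem_filter, Finset.mem_Icc] at hi
      have : (1 - ((i : ℤ) : ZMod m) - 1) = -(i : ZMod m) := by push_cast; ring
      rw [this]
      exact ((ZMod.isUnit_iff_coprime i m).mpr hi.2).neg
    exact hu.ne_zero h2
end
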